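/- Let α be an arrow such that ᾱ is virtual and ᾱ is not a loop, and let β be the arrow with g(β) = f²(ᾱ). Then the following six products vanish in Λ: x_ᾱ x_{f(ᾱ)} x_{g(f(ᾱ))} = 0, x_{f²(ᾱ)} x_ᾱ x_{f²(α)} = 0, x_{f(α)} x_{f²(α)} x_ᾱ = 0, x_{f²(α)} x_ᾱ x_{f(ᾱ)} = 0, x_ᾱ x_{f²(α)} x_α = 0, and x_β x_{f²(ᾱ)} x_ᾱ = 0. -/

import Mathlib

/-- A triangulation quiver: a connected 2-regular quiver `(Q₀ = V, Q₁ = A, s, t)`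
with at least two vertices, together with a permutation `f` of the arrows with
`t α = s (f α)` and `f³ = id`.  Two-regularity is encoded via the involution
`bar` on arrows (`bar α` is the unique arrow `≠ α` with the same source);
the in-degree condition follows from `f` being a bijection. -/
structure TQ (V A : Type) [Fintype V] [DecidableEq V] [Fintype A] [DecidableEq A] where
  s : A → V
  t : A → V
  bar : A → A
  bar_ne : ∀ a, bar a ≠ a
  bar_invol : ∀ a, bar (bar a) = a
  s_bar : ∀ a, s (bar a) = s a
  bar_complete : ∀ a b, s b = s a → b = a ∨ b = bar a
  s_surj : ∀ i, ∃ a, s a = i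
  f : Equiv.Perm A
  t_eq : ∀ a, t a = s (f a)
  f_cube : ∀ a, f (f (f a)) = a
  connected : ∀ i j : V, Relation.ReflTransGen
      (fun p q => ∃ e, (s e = p ∧ t e = q) ∨ (s e = q ∧ t e = p)) i j
  two_vertices : 2 ≤ Fintype.card V

variable {V A : Type} [Fintype V] [DecidableEq V] [Fintype A] [DecidableEq A]

/-- The permutation `g` of arrows, `g α = \overline{f α}`. -/
def TQ.g (Q : TQ V A) (a : A) : A := Q.bar (Q.f a)

/-- `n α` is the length of the `g`-cycle of `α`. -/
noncomputable def TQ.n (Q : TQ V A) (a : A) : ℕ := Function.minimalPeriod Q.g a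

/-- A loop is an arrow with equal source and target. -/
def TQ.IsLoop (Q : TQ V A) (a : A) : Prop := Q.s a = Q.t a

/-- A weight function: positive integers `m α`, constant on `g`-cycles. -/
structure Weights (Q : TQ V A) where
  m : A → ℕ
  m_pos : ∀ a, 0 < m a
  m_g : ∀ a, m (Q.g a) = m a

/-- An arrow `α` is virtual if `m α * n α = 2`. -/
def Weights.Virtual {Q : TQ V A} (W : Weights Q) (a : A) : Prop := W.m a * Q.n a = 2

/-- The Assumption: (1) `m α n α ≥ 2` for all `α`; (2) `m α n α ≥ 3` whenever `ᾱ` is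
virtual and not a loop; (3) `m α n α ≥ 4` whenever `ᾱ` is virtual and a loop. -/
def Weights.Assumption {Q : TQ V A} (W : Weights Q) : Prop :=
  (∀ a, 2 ≤ W.m a * Q.n a) ∧
  (∀ a, W.Virtual (Q.bar a) → ¬ Q.IsLoop (Q.bar a) → 3 ≤ W.m a * Q.n a) ∧
  (∀ a, W.Virtual (Q.bar a) → Q.IsLoop (Q.bar a) → 4 ≤ W.m a * Q.n a)

/-- The data of an associative unital `K`-algebra `Λ` generated by pairwise orthogonal
idempotents `e i` summing to `1`, elements `x α ∈ e (s α) * Λ * e (t α)`, and nonzero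
parameters `c α ∈ K` constant on `g`-cycles. -/
structure AlgData (Q : TQ V A) (W : Weights Q) (K : Type) [Field K]
    (Λ : Type) [Ring Λ] [Algebra K Λ] where
  e : V → Λ
  x : A → Λ
  c : A → K
  c_ne : ∀ a, c a ≠ 0
  c_g : ∀ a, c (Q.g a) = c a
  e_orth : ∀ i j, e i * e j = if i = j then e i else 0
  e_sum : ∑ i, e i = 1
  x_sandwich : ∀ a, e (Q.s a) * x a * e (Q.t a) = x a

variable {Q : TQ V A} {W : Weights Q} {K : Type} [Field K] {Λ : Type} [Ring Λ] [Algebra K Λ]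

/-- `B α = x_α x_{g α} ⋯ x_{g^{m_α n_α − 1} α}`, the full product along the `g`-cycle. -/
noncomputable def AlgData.B (D : AlgData Q W K Λ) (a : A) : Λ :=
  ((List.range (W.m a * Q.n a)).map (fun k => D.x (Q.g^[k] a))).prod

/-- `A α = x_α x_{g α} ⋯ x_{g^{m_α n_α − 2} α}`, of length `m_α n_α − 1`. -/
noncomputable def AlgData.Apath (D : AlgData Q W K Λ) (a : A) : Λ :=
  ((List.range (W.m a * Q.n a - 1)).map (fun k => D.x (Q.g^[k] a))).prod

/-- The defining relations (R1), (R2), (R3) of a weighted surface algebra. -/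
def AlgData.Rels (D : AlgData Q W K Λ) : Prop :=
  (∀ a, D.x a * D.x (Q.f a) = D.c (Q.bar a) • D.Apath (Q.bar a)) ∧
  (∀ a, ¬ W.Virtual (Q.f (Q.f a)) →
      ¬ (W.Virtual (Q.f (Q.bar a)) ∧ W.m (Q.bar a) = 1 ∧ Q.n (Q.bar a) = 3) →
      D.x a * D.x (Q.f a) * D.x (Q.g (Q.f a)) = 0) ∧
  (∀ a, ¬ W.Virtual (Q.f a) →
      ¬ (W.Virtual (Q.f (Q.f a)) ∧ W.m (Q.f a) = 1 ∧ Q.n (Q.f a) = 3) →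
      D.x a * D.x (Q.g a) * D.x (Q.f (Q.g a)) = 0)

/-- `J`: the two-sided ideal of `Λ` generated by the `x α`, as a `K`-submodule. -/
def AlgData.J (D : AlgData Q W K Λ) : Submodule K Λ :=
  Submodule.span K {z | ∃ (a : A) (u v : Λ), z = u * D.x a * v}

/-!
Write `b = ᾱ`. Since `g a = c ↔ a = f² c̄`, the `g`-cycle of any arrow `a` of length at most two
(in particular of a virtual arrow) contains `f² ā`, and equals `(a, f² ā)` when `a` is not a loop.
Hence `g b = f² α`, so `f² α` is virtual and `f b = \overline{f² α}`; the Assumption then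
forbids `α` and `f b` from being virtual. As `m` and `n` are constant on `g`-cycles, this rules out
virtual arrows among all arrows in the side conditions of (R2) and (R3) needed for the six
products. In the exceptional case `n_ā = 3` of (R2) at `a`, the `g`-cycle of `ā` is
`(f² a, ā, g ā)`, which forces `f(\overline{f² a})` to be virtual along with `f ā`; for the
arrows at hand this is `α` or `f b`.
-/

namespace TQ

@[simp]
lemma bar_bar (a : A) : Q.bar (Q.bar a) = a := Q.bar_invol a

@[simp]
lemma f_f_f (a : A) : Q.f (Q.f (Q.f a)) = a := Q.f_cube a

lemma bar_injective : Function.Injective Q.bar :=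
  Function.LeftInverse.injective Q.bar_invol

lemma g_injective : Function.Injective Q.g :=
  Q.bar_injective.comp Q.f.injective

lemma g_f_f (a : A) : Q.g (Q.f (Q.f a)) = Q.bar a := by
  simp [g]

lemma g_eq_iff {a b : A} : Q.g a = b ↔ a = Q.f (Q.f (Q.bar b)) := by
  constructor
  · rintro rfl
    simp [g]
  · rintro rfl
    simp [g_f_f]

lemma f_eq_bar_of_g_eq {a b : A} (h : Q.g a = b) : Q.f a = Q.bar b := by
  rw [← h, g, bar_bar]

lemma isLoop_iff (a : A) : Q.IsLoop a ↔ Q.f a = a ∨ Q.f a = Q.bar a := by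
  rw [IsLoop, t_eq]
  constructor
  · exact fun h => Q.bar_complete a (Q.f a) h.symm
  · rintro (h | h) <;> rw [h]
    exact (Q.s_bar a).symm

lemma isLoop_of_g_eq_self {a : A} (h : Q.g a = a) : Q.IsLoop a :=
  (Q.isLoop_iff a).2 (Or.inr (Q.f_eq_bar_of_g_eq h))

lemma not_isLoop_f {b : A} (hl : ¬ Q.IsLoop b) (hg : Q.g b = Q.f (Q.f (Q.bar b))) :
    ¬ Q.IsLoop (Q.f b) := by
  rw [Q.isLoop_iff]
  rintro (h | h)
  · exact hl ((Q.isLoop_iff b).2 (Or.inl (Q.f.injective h)))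
  · rw [← g, hg] at h
    exact Q.bar_ne b (Q.f.injective (Q.f.injective h)).symm

lemma mem_periodicPts_g (a : A) : a ∈ Function.periodicPts Q.g :=
  Q.g_injective.mem_periodicPts a

lemma n_pos (a : A) : 0 < Q.n a :=
  Function.minimalPeriod_pos_of_mem_periodicPts (Q.mem_periodicPts_g a)

lemma iterate_n (a : A) : Q.g^[Q.n a] a = a :=
  Function.iterate_minimalPeriod

lemma n_g (a : A) : Q.n (Q.g a) = Q.n a :=
  Function.minimalPeriod_apply (Q.mem_periodicPts_g a)

lemma g_g_bar_of_n_bar_eq_three {a : A} (hn : Q.n (Q.bar a) = 3) :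
    Q.g (Q.g (Q.bar a)) = Q.f (Q.f a) := by
  apply Q.g_injective
  have h := Q.iterate_n (Q.bar a)
  rw [hn] at h
  simpa [g_f_f] using h

end TQ

namespace Weights

lemma m_mul_n_g (a : A) : W.m (Q.g a) * Q.n (Q.g a) = W.m a * Q.n a := by
  rw [W.m_g, Q.n_g]

lemma virtual_g_iff (a : A) : W.Virtual (Q.g a) ↔ W.Virtual a := by
  rw [Virtual, Virtual, m_mul_n_g]

lemma virtual_f_f_iff (a : A) : W.Virtual (Q.f (Q.f a)) ↔ W.Virtual (Q.bar a) := by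
  rw [← virtual_g_iff, Q.g_f_f]

namespace Virtual

variable {a : A}

lemma g_eq_self_or_g_g_eq_self (h : W.Virtual a) : Q.g a = a ∨ Q.g (Q.g a) = a := by
  have hn : Q.n a ≤ 2 := h ▸ Nat.le_mul_of_pos_left _ (W.m_pos a)
  have hit := Q.iterate_n a
  have := Q.n_pos a
  interval_cases Q.n a
  · exact Or.inl hit
  · exact Or.inr hit

lemma f_f_bar (h : W.Virtual a) : W.Virtual (Q.f (Q.f (Q.bar a))) := by
  rcases h.g_eq_self_or_g_g_eq_self with h1 | h2
  · rwa [← Q.g_eq_iff.1 h1]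
  · rwa [← Q.g_eq_iff.1 h2, W.virtual_g_iff]

lemma g_eq_of_not_isLoop (h : W.Virtual a) (hl : ¬ Q.IsLoop a) :
    Q.g a = Q.f (Q.f (Q.bar a)) := by
  rcases h.g_eq_self_or_g_g_eq_self with h1 | h2
  · exact absurd (Q.isLoop_of_g_eq_self h1) hl
  · exact Q.g_eq_iff.1 h2

lemma f_bar_f_f (hn : Q.n (Q.bar a) = 3) (h : W.Virtual (Q.f (Q.bar a))) :
    W.Virtual (Q.f (Q.bar (Q.f (Q.f a)))) := by
  have h' := h.f_f_bar
  rwa [← TQ.g, Q.g_eq_iff.1 (Q.g_g_bar_of_n_bar_eq_three hn), TQ.f_f_f] at h'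

end Virtual

lemma Assumption.not_virtual (hA : W.Assumption) {a : A} (hv : W.Virtual (Q.bar a))
    (hl : ¬ Q.IsLoop (Q.bar a)) : ¬ W.Virtual a := by
  have := hA.2.1 a hv hl
  unfold Virtual
  omega

lemma Assumption.not_virtual_f (hA : W.Assumption) {b : A} (hv : W.Virtual b)
    (hl : ¬ Q.IsLoop b) : ¬ W.Virtual (Q.f b) := by
  have hg := hv.g_eq_of_not_isLoop hl
  have hfb := Q.f_eq_bar_of_g_eq hg
  have hfl : ¬ Q.IsLoop (Q.bar (Q.f (Q.f (Q.bar b)))) := hfb ▸ Q.not_isLoop_f hl hg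
  exact fun h => hA.not_virtual (hfb ▸ h) hfl hv.f_f_bar

end Weights

theorem stmt11_general (Q : TQ V A) (W : Weights Q) (hA : W.Assumption)
    {K : Type} [Field K] {Λ : Type} [Ring Λ] [Algebra K Λ]
    (D : AlgData Q W K Λ) (hR : D.Rels) (α β : A)
    (hv : W.Virtual (Q.bar α)) (hl : ¬ Q.IsLoop (Q.bar α))
    (hβ : Q.g β = Q.f (Q.f (Q.bar α))) :
    D.x (Q.bar α) * D.x (Q.f (Q.bar α)) * D.x (Q.g (Q.f (Q.bar α))) = 0 ∧
    D.x (Q.f (Q.f (Q.bar α))) * D.x (Q.bar α) * D.x (Q.f (Q.f α)) = 0 ∧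
    D.x (Q.f α) * D.x (Q.f (Q.f α)) * D.x (Q.bar α) = 0 ∧
    D.x (Q.f (Q.f α)) * D.x (Q.bar α) * D.x (Q.f (Q.bar α)) = 0 ∧
    D.x (Q.bar α) * D.x (Q.f (Q.f α)) * D.x α = 0 ∧
    D.x β * D.x (Q.f (Q.f (Q.bar α))) * D.x (Q.bar α) = 0 := by
  set b := Q.bar α with hb
  have hgb : Q.g b = Q.f (Q.f α) := by simpa [hb] using hv.g_eq_of_not_isLoop hl
  have hα : ¬ W.Virtual α := hA.not_virtual hv hl
  have hfb : ¬ W.Virtual (Q.f b) := hA.not_virtual_f hv hl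
  have hfα : ¬ W.Virtual (Q.f α) := by
    rwa [← W.virtual_g_iff, TQ.g, ← Q.f_eq_bar_of_g_eq hgb]
  have hffb : ¬ W.Virtual (Q.f (Q.f b)) := by rwa [W.virtual_f_f_iff, hb, TQ.bar_bar]
  have hδ : ¬ W.Virtual (Q.bar (Q.f (Q.f b))) := fun h => hfb (by simpa using h.f_f_bar)
  have hexc : ¬ (W.Virtual (Q.f (Q.bar (Q.f (Q.f b)))) ∧ W.m (Q.bar (Q.f (Q.f b))) = 1 ∧
      Q.n (Q.bar (Q.f (Q.f b))) = 3) := fun ⟨h, _, hn⟩ => by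
    have := h.f_bar_f_f hn
    rw [TQ.f_f_f, ← TQ.g, hgb, TQ.f_f_f] at this
    exact hα this
  have hfβ : Q.f β = Q.bar (Q.f (Q.f b)) := Q.f_eq_bar_of_g_eq hβ
  refine ⟨?_, ?_, ?_, ?_, ?_, ?_⟩
  · exact hR.2.1 b hffb fun h => hfα (by simpa [hb] using h.1)
  · simpa [hgb] using hR.2.1 (Q.f (Q.f b)) (by simpa using hfb) (by simpa using hexc)
  · simpa [Q.g_f_f] using hR.2.1 (Q.f α) (by simpa using hα)
      fun ⟨h, _, hn⟩ => hfb (by simpa [hb] using h.f_bar_f_f hn)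
  · simpa [Q.g_f_f] using hR.2.2 (Q.f (Q.f α)) (by simpa using hα)
      fun h => hfα (by simpa using h.1)
  · simpa [hgb] using hR.2.2 b hfb fun h => hffb h.1
  · simpa [hβ] using hR.2.2 β (hfβ ▸ hδ) (hfβ ▸ hexc)

/-- if `ᾱ` is virtual and not a loop, and `β` is the arrow with
`g β = f² ᾱ`, then the six indicated products of type `ζ` or `ξ` vanish in `Λ`. -/
theorem stmt11 (Q : TQ V A) (W : Weights Q) (h3 : 3 ≤ Fintype.card V) (hA : W.Assumption)
    {K : Type} [Field K] {Λ : Type} [Ring Λ] [Algebra K Λ]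
    (D : AlgData Q W K Λ) (hR : D.Rels) (α β : A)
    (hv : W.Virtual (Q.bar α)) (hl : ¬ Q.IsLoop (Q.bar α))
    (hβ : Q.g β = Q.f (Q.f (Q.bar α))) :
    D.x (Q.bar α) * D.x (Q.f (Q.bar α)) * D.x (Q.g (Q.f (Q.bar α))) = 0 ∧
    D.x (Q.f (Q.f (Q.bar α))) * D.x (Q.bar α) * D.x (Q.f (Q.f α)) = 0 ∧
    D.x (Q.f α) * D.x (Q.f (Q.f α)) * D.x (Q.bar α) = 0 ∧
    D.x (Q.f (Q.f α)) * D.x (Q.bar α) * D.x (Q.f (Q.bar α)) = 0 ∧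
    D.x (Q.bar α) * D.x (Q.f (Q.f α)) * D.x α = 0 ∧
    D.x β * D.x (Q.f (Q.f (Q.bar α))) * D.x (Q.bar α) = 0 :=
  stmt11_general Q W hA D hR α β hv hl hβ
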